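/- Let d ≥ 3, let m1, m2 > 1 satisfy 1/m1 + 1/m2 = (d+2)/d, and let C_* > 0. With A, x_*, y_*, and g as defined below, one has g(x_*, y_*) > 0, and for every δ ∈ (0,1) there exist constants μ1 ∈ (0,1) and μ2 > 1 such that for all x, y > 0 with g(x,y) < δ·g(x_*, y_*): (i) if x ≤ x_* and y ≤ y_*, then x < μ1·x_* and y < μ1·y_*; and (ii) if x ≥ x_* and y ≥ y_*, then x > μ2·x_* and y > μ2·y_*. -/

import Mathlib

open MeasureTheory Real

noncomputable section

/-- `α_d = π^{d/2} / Γ(d/2+1)`. -/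
def alphaD (d : ℕ) : ℝ := π ^ ((d : ℝ) / 2) / Gamma ((d : ℝ) / 2 + 1)

/-- `c_d = 1 / (d (d-2) α_d)`. -/
def cD (d : ℕ) : ℝ := 1 / (d * ((d : ℝ) - 2) * alphaD d)

/-- Young's inequality specialized: `s^(1/m) t^(1/n) ≤ ((n-1)/n) s^(n/(m(n-1))) + t/n`. -/
lemma young_spec {m n s t : ℝ} (hm : 1 < m) (hn : 1 < n) (hs : 0 ≤ s) (ht : 0 ≤ t) :
    s ^ (1/m) * t ^ (1/n) ≤ (n-1)/n * s ^ (n/(m*(n-1))) + t / n := by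
  have hn0 : (0:ℝ) < n := by linarith
  have hn1 : (0:ℝ) < n - 1 := by linarith
  have hm0 : (0:ℝ) < m := by linarith
  have hq : (n/(n-1)).HolderConjugate n := by
    have := Real.HolderConjugate.conjExponent hn
    rw [Real.conjExponent] at this
    exact this.symm
  have h := Real.young_inequality_of_nonneg (Real.rpow_nonneg hs (1/m))
    (Real.rpow_nonneg ht (1/n)) hq
  have e1 : (s ^ (1/m)) ^ (n/(n-1)) = s ^ (n/(m*(n-1))) := by
    rw [← Real.rpow_mul hs]
    congr 1
    field_simp
  have e2 : (t ^ (1/n)) ^ n = t := by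
    rw [← Real.rpow_mul ht, one_div, inv_mul_cancel₀ (ne_of_gt hn0), Real.rpow_one]
  rw [e1, e2] at h
  have e3 : s ^ (n/(m*(n-1))) / (n/(n-1)) = (n-1)/n * s ^ (n/(m*(n-1))) := by
    field_simp
  rw [e3] at h
  exact h

/-- Per-coordinate control lemma. -/
lemma aux_main (m n δ : ℝ) (hm : 1 < m) (hn : 1 < n) (hθ : 1 < 1/m + 1/n)
    (hδ0 : 0 < δ) (hδ1 : δ < 1) :
    ∃ a b : ℝ, 0 < a ∧ a < 1 ∧ 1 < b ∧ ∀ s t : ℝ, 0 < s → 0 < t →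
      s/m + t/n - s ^ (1/m) * t ^ (1/n) < δ * (1/m + 1/n - 1) →
      (s ≤ 1 → s < a) ∧ (1 ≤ s → b < s) := by
  have hm0 : (0:ℝ) < m := by linarith
  have hn0 : (0:ℝ) < n := by linarith
  have hn1 : (0:ℝ) < n - 1 := by linarith
  set β : ℝ := n / (m * (n-1)) with hβdef
  have hβpos : 0 < β := by positivity
  have hβ1 : 1 < β := by
    rw [hβdef]
    rw [lt_div_iff₀ (by positivity)]
    have h2 : m + n > m * n := by
      have h3 := mul_lt_mul_of_pos_left hθ (by positivity : (0:ℝ) < m * n)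
      calc m * n = m * n * 1 := by ring
        _ < m * n * (1/m + 1/n) := h3
        _ = n + m := by field_simp
        _ = m + n := by ring
    linarith
  set f : ℝ → ℝ := fun s => s/m - (n-1)/n * s ^ β with hfdef
  have hcβ : (n-1)/n * β = 1/m := by rw [hβdef]; field_simp
  have hcont : Continuous f := by
    apply Continuous.sub (continuous_id.div_const m)
    exact continuous_const.mul
      (continuous_iff_continuousAt.2 fun x =>
        Real.continuousAt_rpow_const x β (Or.inr hβpos.le))
  have hderiv : ∀ s : ℝ, HasDerivAt f (1/m - (n-1)/n * (β * s ^ (β - 1))) s := by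
    intro s
    exact ((hasDerivAt_id s).div_const m).sub
      ((Real.hasDerivAt_rpow_const (Or.inr hβ1.le)).const_mul ((n-1)/n))
  have hderiv' : ∀ s : ℝ, deriv f s = 1/m * (1 - s ^ (β - 1)) := by
    intro s
    rw [(hderiv s).deriv]
    have : (n-1)/n * (β * s ^ (β-1)) = ((n-1)/n * β) * s ^ (β-1) := by ring
    rw [this, hcβ]; ring
  have hmono : StrictMonoOn f (Set.Icc 0 1) := by
    apply strictMonoOn_of_deriv_pos (convex_Icc 0 1) hcont.continuousOn
    intro x hx
    rw [interior_Icc] at hx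
    rw [hderiv' x]
    have : x ^ (β - 1) < 1 := Real.rpow_lt_one hx.1.le hx.2 (by linarith)
    have h1m : (0:ℝ) < 1/m := by positivity
    nlinarith
  have hanti : StrictAntiOn f (Set.Ici 1) := by
    apply strictAntiOn_of_deriv_neg (convex_Ici 1) hcont.continuousOn
    intro x hx
    rw [interior_Ici] at hx
    have hx1 : (1:ℝ) < x := hx
    rw [hderiv' x]
    have : 1 < x ^ (β - 1) :=
      (Real.one_lt_rpow_iff_of_pos (by linarith : (0:ℝ) < x)).2 (Or.inl ⟨hx1, by linarith⟩)
    have h1m : (0:ℝ) < 1/m := by positivity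
    nlinarith
  have hf0 : f 0 = 0 := by
    simp [hfdef, Real.zero_rpow (ne_of_gt hβpos)]
  have hf1 : f 1 = 1/m + 1/n - 1 := by
    simp only [hfdef, Real.one_rpow]
    field_simp
    ring
  have hθ1 : 0 < 1/m + 1/n - 1 := by linarith
  have hδθ : 0 < δ * (1/m + 1/n - 1) := by positivity
  have hδθ1 : δ * (1/m + 1/n - 1) < 1/m + 1/n - 1 := by nlinarith
  -- the value where f hits zero again
  set b0 : ℝ := β ^ (β - 1)⁻¹ with hb0def
  have hb0gt : 1 < b0 := by
    rw [hb0def]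
    exact (Real.one_lt_rpow_iff_of_pos hβpos).2 (Or.inl ⟨hβ1, by simp; linarith⟩)
  have hb0pow : b0 ^ (β - 1) = β := by
    rw [hb0def, ← Real.rpow_mul hβpos.le, inv_mul_cancel₀ (by linarith : β - 1 ≠ 0),
      Real.rpow_one]
  have hfb0 : f b0 = 0 := by
    have hb0pos : 0 < b0 := lt_trans zero_lt_one hb0gt
    have : b0 ^ β = β * b0 := by
      have : b0 ^ β = b0 ^ (β - 1) * b0 ^ (1:ℝ) := by
        rw [← Real.rpow_add hb0pos]; ring_nf
      rw [this, hb0pow, Real.rpow_one]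
    simp only [hfdef, this]
    have : (n-1)/n * (β * b0) = ((n-1)/n * β) * b0 := by ring
    rw [this, hcβ]; ring
  -- choose a via IVT on [0,1]
  obtain ⟨a, haIoo, hfa⟩ : ∃ a ∈ Set.Ioo (0:ℝ) 1, f a = δ * (1/m + 1/n - 1) := by
    have h := intermediate_value_Ioo (zero_le_one) hcont.continuousOn
      (f := f) (a := 0) (b := 1)
    have hmem : δ * (1/m + 1/n - 1) ∈ Set.Ioo (f 0) (f 1) := by
      rw [hf0, hf1]; exact ⟨hδθ, hδθ1⟩
    obtain ⟨a, ha, hfa⟩ := h hmem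
    exact ⟨a, ha, hfa⟩
  -- choose b via IVT on [1, b0]
  obtain ⟨b, hbIoo, hfb⟩ : ∃ b ∈ Set.Ioo (1:ℝ) b0, f b = δ * (1/m + 1/n - 1) := by
    have h := intermediate_value_Ioo' (hb0gt.le) hcont.continuousOn
      (f := f) (a := 1) (b := b0)
    have hmem : δ * (1/m + 1/n - 1) ∈ Set.Ioo (f b0) (f 1) := by
      rw [hfb0, hf1]; exact ⟨hδθ, hδθ1⟩
    obtain ⟨b, hb, hfb⟩ := h hmem
    exact ⟨b, hb, hfb⟩
  refine ⟨a, b, haIoo.1, haIoo.2, hbIoo.1, ?_⟩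
  intro s t hs ht hlt
  have hkey : f s < δ * (1/m + 1/n - 1) := by
    have hy := young_spec hm hn hs.le ht.le
    simp only [hfdef]
    rw [← hβdef] at hy
    linarith
  constructor
  · intro hs1
    by_contra hcon
    push_neg at hcon
    have : f a ≤ f s := hmono.monotoneOn ⟨haIoo.1.le, haIoo.2.le⟩ ⟨hs.le, hs1⟩ hcon
    rw [hfa] at this
    linarith
  · intro hs1
    by_contra hcon
    push_neg at hcon
    have : f b ≤ f s := hanti.antitoneOn (Set.mem_Ici.mpr hs1) (Set.mem_Ici.mpr hbIoo.1.le) hcon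
    rw [hfb] at this
    linarith

theorem stmt_14 (d : ℕ) (hd : 3 ≤ d) (m1 m2 : ℝ) (hm1 : 1 < m1) (hm2 : 1 < m2)
    (hcrit : 1 / m1 + 1 / m2 = ((d : ℝ) + 2) / d)
    (Cs : ℝ) (hCs : 0 < Cs)
    (A xs ys : ℝ) (g : ℝ → ℝ → ℝ)
    (hA : A = m1 * (m2 - 1) / (m2 * (m1 - 1)))
    (hxs : xs = (m1 * A ^ (-(1 / m2)) / (cD d * Cs * (m1 - 1)))
      ^ (1 / (1 / m1 + 1 / m2 - 1)))
    (hys : ys = A * xs)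
    (hg : ∀ x y : ℝ, g x y =
      x / (m1 - 1) + y / (m2 - 1) - cD d * Cs * x ^ (1 / m1) * y ^ (1 / m2)) :
    0 < g xs ys ∧
    ∀ δ : ℝ, 0 < δ → δ < 1 →
      ∃ μ1 μ2 : ℝ, 0 < μ1 ∧ μ1 < 1 ∧ 1 < μ2 ∧
        ∀ x y : ℝ, 0 < x → 0 < y → g x y < δ * g xs ys →
          ((x ≤ xs ∧ y ≤ ys → x < μ1 * xs ∧ y < μ1 * ys) ∧
           (xs ≤ x ∧ ys ≤ y → μ2 * xs < x ∧ μ2 * ys < y)) := by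
  have hd3 : (3:ℝ) ≤ (d:ℝ) := by exact_mod_cast hd
  have hd0 : (0:ℝ) < (d:ℝ) := by linarith
  have hm10 : (0:ℝ) < m1 := by linarith
  have hm20 : (0:ℝ) < m2 := by linarith
  have hm11 : (0:ℝ) < m1 - 1 := by linarith
  have hm21 : (0:ℝ) < m2 - 1 := by linarith
  have halpha : 0 < alphaD d := by
    unfold alphaD
    exact div_pos (Real.rpow_pos_of_pos Real.pi_pos _)
      (Real.Gamma_pos_of_pos (by positivity))
  have hcD : 0 < cD d := by
    unfold cD
    have : (0:ℝ) < (d:ℝ) - 2 := by linarith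
    positivity
  have hK : 0 < cD d * Cs := mul_pos hcD hCs
  have hθ : 1 < 1/m1 + 1/m2 := by
    rw [hcrit]
    rw [lt_div_iff₀ hd0]
    linarith
  have hθ1 : (0:ℝ) < 1/m1 + 1/m2 - 1 := by linarith
  have hA0 : 0 < A := by rw [hA]; positivity
  have hB : 0 < m1 * A ^ (-(1 / m2)) / (cD d * Cs * (m1 - 1)) := by
    have := Real.rpow_pos_of_pos hA0 (-(1/m2))
    positivity
  have hxs0 : 0 < xs := by rw [hxs]; exact Real.rpow_pos_of_pos hB _
  have hys0 : 0 < ys := by rw [hys]; positivity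
  have hxspow : xs ^ (1/m1 + 1/m2 - 1) = m1 * A ^ (-(1 / m2)) / (cD d * Cs * (m1 - 1)) := by
    rw [hxs, ← Real.rpow_mul hB.le, one_div_mul_cancel (ne_of_gt hθ1), Real.rpow_one]
  set R : ℝ := cD d * Cs * xs ^ (1/m1) * ys ^ (1/m2) with hRdef
  have hApow : 0 < A ^ (1/m2) := Real.rpow_pos_of_pos hA0 _
  have hR1 : R = m1 * xs / (m1 - 1) := by
    have h1 : ys ^ (1/m2) = A ^ (1/m2) * xs ^ (1/m2) := by
      rw [hys, Real.mul_rpow hA0.le hxs0.le]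
    have h2 : xs ^ (1/m1) * xs ^ (1/m2) = xs ^ (1/m1 + 1/m2) := by
      rw [← Real.rpow_add hxs0]
    have h3 : xs ^ (1/m1 + 1/m2) = xs ^ (1/m1 + 1/m2 - 1) * xs := by
      conv_lhs => rw [show (1/m1 + 1/m2 : ℝ) = (1/m1 + 1/m2 - 1) + 1 by ring]
      rw [Real.rpow_add hxs0, Real.rpow_one]
    have h4 : A ^ (-(1/m2)) = (A ^ (1/m2))⁻¹ := by
      rw [Real.rpow_neg hA0.le]
    rw [hRdef]
    calc cD d * Cs * xs ^ (1/m1) * ys ^ (1/m2)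
        = cD d * Cs * A ^ (1/m2) * (xs ^ (1/m1) * xs ^ (1/m2)) := by rw [h1]; ring
      _ = cD d * Cs * A ^ (1/m2) * (xs ^ (1/m1 + 1/m2 - 1) * xs) := by rw [h2, h3]
      _ = cD d * Cs * A ^ (1/m2) * (m1 * (A ^ (1/m2))⁻¹ / (cD d * Cs * (m1 - 1)) * xs) := by
          rw [hxspow, h4]
      _ = m1 * xs / (m1 - 1) := by
          field_simp
  have hR0 : 0 < R := by rw [hR1]; positivity
  have e1s : R / m1 = xs / (m1 - 1) := by rw [hR1]; field_simp
  have e2s : R / m2 = ys / (m2 - 1) := by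
    rw [hR1, hys, hA]; field_simp
  have hgs : g xs ys = R * (1/m1 + 1/m2 - 1) := by
    rw [hg xs ys, ← hRdef]
    have : xs / (m1 - 1) + ys / (m2 - 1) - R = R/m1 + R/m2 - R := by
      rw [e1s, e2s]
    rw [this]; ring
  have hgspos : 0 < g xs ys := by
    rw [hgs]; positivity
  refine ⟨hgspos, ?_⟩
  intro δ hδ0 hδ1
  obtain ⟨a1, b1, ha10, ha11, hb11, H1⟩ := aux_main m1 m2 δ hm1 hm2 hθ hδ0 hδ1
  obtain ⟨a2, b2, ha20, ha21, hb21, H2⟩ := aux_main m2 m1 δ hm2 hm1 (by linarith) hδ0 hδ1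
  refine ⟨max a1 a2, min b1 b2, lt_max_of_lt_left ha10, max_lt ha11 ha21,
    lt_min hb11 hb21, ?_⟩
  intro x y hx hy hgxy
  set s : ℝ := x / xs with hsdef
  set t : ℝ := y / ys with htdef
  have hs0 : 0 < s := by positivity
  have ht0 : 0 < t := by positivity
  have hxeq : x = s * xs := by rw [hsdef]; field_simp
  have hyeq : y = t * ys := by rw [htdef]; field_simp
  -- scaling identity
  have hscale : g x y = R * (s/m1 + t/m2 - s ^ (1/m1) * t ^ (1/m2)) := by
    have e1 : R * (s/m1) = x / (m1 - 1) := by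
      have : R * (s/m1) = (R/m1) * s := by ring
      rw [this, e1s, hsdef]
      field_simp
    have e2 : R * (t/m2) = y / (m2 - 1) := by
      have : R * (t/m2) = (R/m2) * t := by ring
      rw [this, e2s, htdef]
      field_simp
    have e3 : R * (s ^ (1/m1) * t ^ (1/m2)) = cD d * Cs * x ^ (1/m1) * y ^ (1/m2) := by
      rw [hsdef, htdef, Real.div_rpow hx.le hxs0.le, Real.div_rpow hy.le hys0.le, hRdef]
      have hxsp : (0:ℝ) < xs ^ (1/m1) := Real.rpow_pos_of_pos hxs0 _
      have hysp : (0:ℝ) < ys ^ (1/m2) := Real.rpow_pos_of_pos hys0 _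
      field_simp
    have expand : R * (s/m1 + t/m2 - s ^ (1/m1) * t ^ (1/m2))
        = R * (s/m1) + R * (t/m2) - R * (s ^ (1/m1) * t ^ (1/m2)) := by ring
    rw [hg x y, expand, e1, e2, e3]
  have hF : s/m1 + t/m2 - s ^ (1/m1) * t ^ (1/m2) < δ * (1/m1 + 1/m2 - 1) := by
    rw [hscale, hgs] at hgxy
    have h' : R * (s/m1 + t/m2 - s ^ (1/m1) * t ^ (1/m2))
        < R * (δ * (1/m1 + 1/m2 - 1)) := by linarith [hgxy]
    exact (mul_lt_mul_iff_right₀ hR0).mp h'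
  have hF' : t/m2 + s/m1 - t ^ (1/m2) * s ^ (1/m1) < δ * (1/m2 + 1/m1 - 1) := by
    have e : t/m2 + s/m1 - t ^ (1/m2) * s ^ (1/m1)
        = s/m1 + t/m2 - s ^ (1/m1) * t ^ (1/m2) := by ring
    have e' : δ * (1/m2 + 1/m1 - 1) = δ * (1/m1 + 1/m2 - 1) := by ring
    rw [e, e']; exact hF
  have Hs := H1 s t hs0 ht0 hF
  have Ht := H2 t s ht0 hs0 hF'
  constructor
  · rintro ⟨hxle, hyle⟩
    have hs1 : s ≤ 1 := (div_le_one hxs0).2 hxle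
    have ht1 : t ≤ 1 := (div_le_one hys0).2 hyle
    have hsa : s < a1 := Hs.1 hs1
    have hta : t < a2 := Ht.1 ht1
    constructor
    · calc x = s * xs := hxeq
        _ < a1 * xs := by exact mul_lt_mul_of_pos_right hsa hxs0
        _ ≤ max a1 a2 * xs := mul_le_mul_of_nonneg_right (le_max_left _ _) hxs0.le
    · calc y = t * ys := hyeq
        _ < a2 * ys := by exact mul_lt_mul_of_pos_right hta hys0
        _ ≤ max a1 a2 * ys := mul_le_mul_of_nonneg_right (le_max_right _ _) hys0.le
  · rintro ⟨hxge, hyge⟩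
    have hs1 : 1 ≤ s := (one_le_div hxs0).2 hxge
    have ht1 : 1 ≤ t := (one_le_div hys0).2 hyge
    have hsb : b1 < s := Hs.2 hs1
    have htb : b2 < t := Ht.2 ht1
    constructor
    · calc min b1 b2 * xs ≤ b1 * xs := mul_le_mul_of_nonneg_right (min_le_left _ _) hxs0.le
        _ < s * xs := mul_lt_mul_of_pos_right hsb hxs0
        _ = x := hxeq.symm
    · calc min b1 b2 * ys ≤ b2 * ys := mul_le_mul_of_nonneg_right (min_le_right _ _) hys0.le
        _ < t * ys := mul_lt_mul_of_pos_right htb hys0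
        _ = y := hyeq.symm
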